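/- Let q ≥ 1 and m ≥ 1 be integers and let α > 0 be a real number. Then there is a constant C > 0, depending only on m, q and α, with the following property. Let a₁,…,a_q, b₁,…,b_q ∈ ℂ^m satisfy Σ_{j=1}^q |a_j − b_j|² ≤ Σ_{j=1}^q |a_j − b_{σ(j)}|² for every permutation σ of {1,…,q}, and define φ, ψ : [0,2π] → 𝒜_q(ℝ^m) by φ(θ) = Σ_{j=1}^q ⟦Re(a_j e^{iαθ})⟧ and ψ(θ) = Σ_{j=1}^q ⟦Re(b_j e^{iαθ})⟧. Then C^{-1} Σ_{j=1}^q |a_j − b_j|² ≤ ∫₀^{2π} 𝒢(φ(θ), ψ(θ))² dθ ≤ C Σ_{j=1}^q |a_j − b_j|². -/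

import Mathlib

/-!
Write `w = e^{iαθ}` and `z_σ = (a_j - b_{σ j})_{j,k}`, so that
`𝒢(φ θ, ψ θ)² = min_σ ∑ Re(z_σ w)²`. From `2 Re(u)² = |u|² + Re(u²)`,
`2 ∑ Re(z_σ w)² = S_σ + Re(w² ∑ z_σ²)` with `S_σ = ∑ |z_σ|²`, and since `|∑ z_σ²| ≤ S_σ` this
gives `∑ Re(z_σ w)² ≥ S_σ Im(v_σ w²)² / 4` for a unit `v_σ` depending only on `z_σ`; the
hypothesis gives `S_σ ≥ S_id`. Bounding the minimum over `σ` by the product of the factors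
`Im(v_σ w²)² ≤ 1`, the lower bound reduces to a positive lower bound for
`∫₀^{2π} ∏_σ Im(v_σ e^{2iαθ})² dθ`, uniform over the torus `(v_σ)_σ`. Each such integral is
positive, the integrand vanishing only on a countable set, and it depends continuously on
`(v_σ)`, so compactness of the torus provides the constant. The upper bound is the choice
`σ = id`.
-/

open scoped BigOperators Real

/-- The metric `𝒢` on the space `𝒜_q(ℝ^m)` of unordered `q`-tuples of points of `ℝ^m`:
`𝒢(a,b) = min_σ (∑_j |a_j − b_{σ(j)}|²)^{1/2}`, the minimum over permutations `σ`. -/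
noncomputable def Gdist {q m : ℕ} (a b : Fin q → EuclideanSpace ℝ (Fin m)) : ℝ :=
  ⨅ σ : Equiv.Perm (Fin q), Real.sqrt (∑ j, ‖a j - b (σ j)‖ ^ 2)

/-- The unordered `q`-tuple `φ(θ) = ∑_{j=1}^q ⟦Re(a_j e^{iαθ})⟧`. -/
noncomputable def rotTuple (m q : ℕ) (a : Fin q → Fin m → ℂ) (α θ : ℝ) :
    Fin q → EuclideanSpace ℝ (Fin m) := fun j =>
  (EuclideanSpace.equiv (Fin m) ℝ).symm fun k =>
    (a j k * Complex.exp (Complex.I * Complex.ofReal (α * θ))).re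

open Finset

section

variable {m q : ℕ}

theorem gdist_nonneg (a b : Fin q → EuclideanSpace ℝ (Fin m)) : 0 ≤ Gdist a b :=
  Real.iInf_nonneg fun _ => Real.sqrt_nonneg _

theorem gdist_sq_le (a b : Fin q → EuclideanSpace ℝ (Fin m)) (σ : Equiv.Perm (Fin q)) :
    Gdist a b ^ 2 ≤ ∑ j, ‖a j - b (σ j)‖ ^ 2 :=
  (Real.le_sqrt (gdist_nonneg a b) (by positivity)).1 (ciInf_le (Finite.bddBelow_range _) σ)

theorem le_gdist_sq {a b : Fin q → EuclideanSpace ℝ (Fin m)} {r : ℝ}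
    (h : ∀ σ : Equiv.Perm (Fin q), r ≤ ∑ j, ‖a j - b (σ j)‖ ^ 2) : r ≤ Gdist a b ^ 2 := by
  rw [← Real.sqrt_le_left (gdist_nonneg a b)]
  exact le_ciInf fun σ => Real.sqrt_le_sqrt (h σ)

theorem Continuous.gdist {X : Type*} [TopologicalSpace X]
    {a b : X → Fin q → EuclideanSpace ℝ (Fin m)}
    (ha : Continuous a) (hb : Continuous b) : Continuous fun x => Gdist (a x) (b x) := by
  simp_rw [_root_.Gdist, ← inf'_univ_eq_ciInf]
  exact Continuous.finset_inf'_apply _ fun σ _ => by fun_prop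

theorem rotTuple_apply (a : Fin q → Fin m → ℂ) (α θ : ℝ) (j : Fin q) (k : Fin m) :
    rotTuple m q a α θ j k = (a j k * Circle.exp (α * θ)).re := by
  rw [Circle.coe_exp, mul_comm _ Complex.I]; rfl

theorem continuous_rotTuple (a : Fin q → Fin m → ℂ) (α : ℝ) :
    Continuous (rotTuple m q a α) := by
  unfold rotTuple; fun_prop

theorem norm_rotTuple_sub_sq (a b : Fin q → Fin m → ℂ) (α θ : ℝ) (j i : Fin q) :
    ‖rotTuple m q a α θ j - rotTuple m q b α θ i‖ ^ 2 =
      ∑ k, ((a j k - b i k) * Circle.exp (α * θ)).re ^ 2 := by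
  simp [EuclideanSpace.norm_sq_eq, rotTuple_apply, sub_mul]

theorem two_mul_re_sq (u : ℂ) : 2 * u.re ^ 2 = ‖u‖ ^ 2 + (u ^ 2).re := by
  rw [Complex.sq_norm, Complex.normSq_apply, sq, sq, Complex.mul_re]; ring

theorem exists_circle_forall_mul_im_sq_le {ι : Type*} [Fintype ι] (z : ι → ℂ) :
    ∃ v : Circle, ∀ w : Circle,
      (∑ i, ‖z i‖ ^ 2) * ((v * w ^ 2 : Circle) : ℂ).im ^ 2 ≤ 4 * ∑ i, (z i * w).re ^ 2 := by
  set Z := ∑ i, z i ^ 2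
  refine ⟨Circle.exp (Complex.arg Z), fun w => ?_⟩
  set u : ℂ := ((Circle.exp (Complex.arg Z) * w ^ 2 : Circle) : ℂ)
  have hZu : Z * (w : ℂ) ^ 2 = ‖Z‖ * u := by
    simp only [u, Circle.coe_mul, Circle.coe_pow, Circle.coe_exp]
    rw [← mul_assoc, Complex.norm_mul_exp_arg_mul_I]
  have hsum : 2 * ∑ i, (z i * w).re ^ 2 = (∑ i, ‖z i‖ ^ 2) + ‖Z‖ * u.re := by
    have hw : ‖(w : ℂ)‖ = 1 := Circle.norm_coe w
    simp only [mul_sum, two_mul_re_sq, sum_add_distrib, norm_mul, hw, mul_one, mul_pow,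
      ← Complex.re_sum, ← sum_mul]
    rw [hZu, Complex.re_ofReal_mul]
  have hZ : ‖Z‖ ≤ ∑ i, ‖z i‖ ^ 2 := (norm_sum_le _ _).trans_eq (by simp [norm_pow])
  have hu : u.re ^ 2 + u.im ^ 2 = 1 := by
    have := Circle.norm_coe (Circle.exp (Complex.arg Z) * w ^ 2)
    rw [← one_pow 2, ← this, Complex.sq_norm, Complex.normSq_apply]; ring
  have hlin : -((∑ i, ‖z i‖ ^ 2) * |u.re|) ≤ ‖Z‖ * u.re := by
    nlinarith [neg_abs_le u.re, abs_nonneg u.re, norm_nonneg Z]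
  have hS : 0 ≤ ∑ i, ‖z i‖ ^ 2 := (norm_nonneg Z).trans hZ
  rw [← sq_abs u.re] at hu
  nlinarith [mul_nonneg hS (sq_nonneg (1 - |u.re|))]

theorem im_circle_mul_exp_eq_sin (v : Circle) (t : ℝ) :
    ((v * Circle.exp t : Circle) : ℂ).im = Real.sin (Complex.arg v + t) := by
  nth_rewrite 1 [← Circle.exp_arg v]
  rw [← Circle.exp_add, Circle.coe_exp, Complex.exp_ofReal_mul_I_im]

theorem countable_setOf_im_circle_mul_exp_eq_zero {β : ℝ} (hβ : β ≠ 0) (v : Circle) :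
    {θ : ℝ | ((v * Circle.exp (β * θ) : Circle) : ℂ).im = 0}.Countable := by
  refine (Set.countable_range fun n : ℤ => (n * π - Complex.arg v) / β).mono fun θ hθ => ?_
  obtain ⟨n, hn⟩ := Real.sin_eq_zero_iff.1 ((im_circle_mul_exp_eq_sin v _).symm.trans hθ)
  exact ⟨n, by field_simp; linarith⟩

theorem intervalIntegral_prod_im_sq_pos {ι : Type*} [Fintype ι] {β : ℝ} (hβ : β ≠ 0)
    {a b : ℝ} (hab : a < b) (v : ι → Circle) :
    0 < ∫ θ in a..b, ∏ i, ((v i * Circle.exp (β * θ) : Circle) : ℂ).im ^ 2 := by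
  have hcont : Continuous fun θ : ℝ => ∏ i, ((v i * Circle.exp (β * θ) : Circle) : ℂ).im ^ 2 := by
    fun_prop
  rw [intervalIntegral.integral_pos_iff_support_of_nonneg_ae
    (Filter.Eventually.of_forall fun θ => by positivity) (hcont.intervalIntegrable a b)]
  set N := ⋃ i, {θ : ℝ | ((v i * Circle.exp (β * θ) : Circle) : ℂ).im = 0}
  have hN : MeasureTheory.volume N = 0 :=
    (Set.countable_iUnion fun i =>
      countable_setOf_im_circle_mul_exp_eq_zero hβ (v i)).measure_zero _
  have hsub : Set.Ioc a b \ N ⊆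
      Function.support (fun θ : ℝ => ∏ i, ((v i * Circle.exp (β * θ) : Circle) : ℂ).im ^ 2) ∩
        Set.Ioc a b := by
    rintro θ ⟨hθ, hθN⟩
    simp only [N, Set.mem_iUnion, Set.mem_ofPred_eq, not_exists] at hθN
    exact ⟨prod_ne_zero_iff.2 fun i _ => pow_ne_zero 2 (hθN i), hθ⟩
  refine ⟨hab, lt_of_lt_of_le ?_ (MeasureTheory.measure_mono hsub)⟩
  simp [MeasureTheory.measure_sdiff_null hN, hab]

theorem exists_pos_forall_le_intervalIntegral_prod_im_sq {ι : Type*} [Fintype ι] {β : ℝ}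
    (hβ : β ≠ 0) {a b : ℝ} (hab : a < b) :
    ∃ c > 0, ∀ v : ι → Circle,
      c ≤ ∫ θ in a..b, ∏ i, ((v i * Circle.exp (β * θ) : Circle) : ℂ).im ^ 2 := by
  have hcont : Continuous fun v : ι → Circle =>
      ∫ θ in a..b, ∏ i, ((v i * Circle.exp (β * θ) : Circle) : ℂ).im ^ 2 :=
    intervalIntegral.continuous_parametric_intervalIntegral_of_continuous' (by fun_prop) a b
  obtain ⟨v₀, -, hv₀⟩ := isCompact_univ.exists_isMinOn Set.univ_nonempty hcont.continuousOn
  exact ⟨_, intervalIntegral_prod_im_sq_pos hβ hab v₀, fun v => hv₀ (Set.mem_univ v)⟩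

theorem gdist_rotTuple_sq_le (a b : Fin q → Fin m → ℂ) (α θ : ℝ) :
    Gdist (rotTuple m q a α θ) (rotTuple m q b α θ) ^ 2 ≤ ∑ j, ∑ k, ‖a j k - b j k‖ ^ 2 := by
  refine (gdist_sq_le _ _ 1).trans (sum_le_sum fun j _ => ?_)
  rw [Equiv.Perm.one_apply, norm_rotTuple_sub_sq]
  refine sum_le_sum fun k _ => ?_
  calc ((a j k - b j k) * Circle.exp (α * θ)).re ^ 2
      ≤ ‖(a j k - b j k) * Circle.exp (α * θ)‖ ^ 2 :=
        sq_le_sq.2 ((Complex.abs_re_le_norm _).trans_eq (abs_norm _).symm)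
    _ = ‖a j k - b j k‖ ^ 2 := by rw [norm_mul, Circle.norm_coe, mul_one]

theorem exists_forall_le_gdist_rotTuple_sq {a b : Fin q → Fin m → ℂ} (α : ℝ)
    (hab : ∀ σ : Equiv.Perm (Fin q),
      (∑ j, ∑ k, ‖a j k - b j k‖ ^ 2) ≤ ∑ j, ∑ k, ‖a j k - b (σ j) k‖ ^ 2) :
    ∃ v : Equiv.Perm (Fin q) → Circle, ∀ θ : ℝ,
      (∑ j, ∑ k, ‖a j k - b j k‖ ^ 2) / 4 *
          ∏ σ, ((v σ * Circle.exp (2 * α * θ) : Circle) : ℂ).im ^ 2 ≤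
        Gdist (rotTuple m q a α θ) (rotTuple m q b α θ) ^ 2 := by
  choose v hv using fun σ : Equiv.Perm (Fin q) =>
    exists_circle_forall_mul_im_sq_le fun p : Fin q × Fin m => a p.1 p.2 - b (σ p.1) p.2
  refine ⟨v, fun θ => le_gdist_sq fun σ => ?_⟩
  have him : ∀ u : Circle, (u : ℂ).im ^ 2 ≤ 1 := fun u =>
    sq_le_one_iff_abs_le_one _ |>.2 ((Complex.abs_im_le_norm _).trans_eq (Circle.norm_coe u))
  have hprod : ∏ τ, ((v τ * Circle.exp (2 * α * θ) : Circle) : ℂ).im ^ 2 ≤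
      ((v σ * Circle.exp (2 * α * θ) : Circle) : ℂ).im ^ 2 := by
    rw [← mul_prod_erase _ _ (mem_univ σ)]
    exact mul_le_of_le_one_right (sq_nonneg _)
      (prod_le_one (fun _ _ => sq_nonneg _) fun τ _ => him _)
  have hexp : Circle.exp (2 * α * θ) = Circle.exp (α * θ) ^ 2 := by
    rw [mul_assoc, ← Circle.exp_natCast_mul]; norm_num
  have key := hv σ (Circle.exp (α * θ))
  simp only [← hexp, Fintype.sum_prod_type] at key
  calc _ ≤ (∑ j, ∑ k, ‖a j k - b j k‖ ^ 2) / 4 *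
        ((v σ * Circle.exp (2 * α * θ) : Circle) : ℂ).im ^ 2 := by gcongr
    _ ≤ (∑ j, ∑ k, ‖a j k - b (σ j) k‖ ^ 2) / 4 *
        ((v σ * Circle.exp (2 * α * θ) : Circle) : ℂ).im ^ 2 := by gcongr ?_ / 4 * _; exact hab σ
    _ ≤ ∑ j, ∑ k, ((a j k - b (σ j) k) * Circle.exp (α * θ)).re ^ 2 := by linarith
    _ = ∑ j, ‖rotTuple m q a α θ j - rotTuple m q b α θ (σ j)‖ ^ 2 := by
        simp only [norm_rotTuple_sub_sq]

end

theorem statement2_general (m q : ℕ) (α : ℝ) (hα : 0 < α) :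
    ∃ C : ℝ, 0 < C ∧
      ∀ a b : Fin q → Fin m → ℂ,
        (∀ σ : Equiv.Perm (Fin q),
          (∑ j, ∑ k, ‖a j k - b j k‖ ^ 2) ≤
            ∑ j, ∑ k, ‖a j k - b (σ j) k‖ ^ 2) →
        C⁻¹ * (∑ j, ∑ k, ‖a j k - b j k‖ ^ 2) ≤
            (∫ θ in (0:ℝ)..(2 * π),
              Gdist (rotTuple m q a α θ) (rotTuple m q b α θ) ^ 2) ∧
          (∫ θ in (0:ℝ)..(2 * π),
              Gdist (rotTuple m q a α θ) (rotTuple m q b α θ) ^ 2) ≤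
            C * ∑ j, ∑ k, ‖a j k - b j k‖ ^ 2 := by
  obtain ⟨c, hc, hcle⟩ := exists_pos_forall_le_intervalIntegral_prod_im_sq
    (ι := Equiv.Perm (Fin q)) (by positivity : 2 * α ≠ 0) Real.two_pi_pos
  refine ⟨max (2 * π) (4 / c), by positivity, fun a b hab => ?_⟩
  set D := ∑ j, ∑ k, ‖a j k - b j k‖ ^ 2
  have hG : Continuous fun θ => Gdist (rotTuple m q a α θ) (rotTuple m q b α θ) ^ 2 :=
    ((continuous_rotTuple a α).gdist (continuous_rotTuple b α)).pow 2
  obtain ⟨v, hv⟩ := exists_forall_le_gdist_rotTuple_sq α hab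
  constructor
  · calc (max (2 * π) (4 / c))⁻¹ * D ≤ (4 / c)⁻¹ * D := by gcongr; exact le_max_right _ _
      _ = D / 4 * c := by rw [inv_div]; ring
      _ ≤ D / 4 * ∫ θ in (0:ℝ)..(2 * π),
            ∏ σ, ((v σ * Circle.exp (2 * α * θ) : Circle) : ℂ).im ^ 2 := by
          gcongr; exact hcle v
      _ ≤ _ := by
          rw [← intervalIntegral.integral_const_mul]
          exact intervalIntegral.integral_mono_on Real.two_pi_pos.le
            (Continuous.intervalIntegrable (by fun_prop) _ _) (hG.intervalIntegrable _ _)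
            fun θ _ => hv θ
  · calc _ ≤ ∫ _ in (0:ℝ)..(2 * π), D :=
          intervalIntegral.integral_mono_on Real.two_pi_pos.le (hG.intervalIntegrable _ _)
            intervalIntegrable_const fun θ _ => gdist_rotTuple_sq_le a b α θ
      _ = 2 * π * D := by simp
      _ ≤ _ := by gcongr; exact le_max_left _ _

/-- Let `q, m ≥ 1` and `α > 0` real.  There is a constant `C > 0`, depending only on
`m, q, α`, such that: for all `a₁,…,a_q, b₁,…,b_q ∈ ℂ^m` with
`∑_j |a_j − b_j|² ≤ ∑_j |a_j − b_{σ(j)}|²` for every permutation `σ` of `{1,…,q}`,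
the functions `φ(θ) = ∑_j ⟦Re(a_j e^{iαθ})⟧`, `ψ(θ) = ∑_j ⟦Re(b_j e^{iαθ})⟧` satisfy
`C⁻¹ ∑_j |a_j − b_j|² ≤ ∫₀^{2π} 𝒢(φ(θ), ψ(θ))² dθ ≤ C ∑_j |a_j − b_j|²`. -/
theorem statement2 (m q : ℕ) (hm : 1 ≤ m) (hq : 1 ≤ q) (α : ℝ) (hα : 0 < α) :
    ∃ C : ℝ, 0 < C ∧
      ∀ a b : Fin q → Fin m → ℂ,
        (∀ σ : Equiv.Perm (Fin q),
          (∑ j, ∑ k, ‖a j k - b j k‖ ^ 2) ≤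
            ∑ j, ∑ k, ‖a j k - b (σ j) k‖ ^ 2) →
        C⁻¹ * (∑ j, ∑ k, ‖a j k - b j k‖ ^ 2) ≤
            (∫ θ in (0:ℝ)..(2 * π),
              Gdist (rotTuple m q a α θ) (rotTuple m q b α θ) ^ 2) ∧
          (∫ θ in (0:ℝ)..(2 * π),
              Gdist (rotTuple m q a α θ) (rotTuple m q b α θ) ^ 2) ≤
            C * ∑ j, ∑ k, ‖a j k - b j k‖ ^ 2 :=
  statement2_general m q α hα
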